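/- If the reward is linear in the backward features, r(s,a) = B(s,a)ᵀ z, and the successor measure factorizes as M^π(s₀,a₀,s,a) = F(s₀,a₀)ᵀ B(s,a)·d^β(s,a) with ∑_{(s,a)} d^β(s,a) B(s,a) B(s,a)ᵀ = I (orthonormality of backward features under d^β), then the Q-function Q_r^π(s₀,a₀) := ∑_{(s,a)} M^π(s₀,a₀,s,a) r(s,a) equals F(s₀,a₀)ᵀ z. -/
import Mathlib


/-- if `r(s,a) = B(s,a)ᵀ z`, the successor measure factorizes as
`M^π = (Fᵀ B)·d^β`, and the backward features are orthonormal under `d^β`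
(`∑ d^β B Bᵀ = I`), then `Q_r^π(s₀,a₀) = ∑ M^π(s₀,a₀,·) r(·) = F(s₀,a₀)ᵀ z`. -/
theorem Q_eq_forward_dot_z
    {SA : Type*} [Fintype SA] (d : ℕ)
    (dβ : SA → ℝ) (F B : SA → Fin d → ℝ) (z : Fin d → ℝ)
    (M : SA → SA → ℝ) (r : SA → ℝ)
    (hr : ∀ x, r x = ∑ i : Fin d, B x i * z i)
    (hM : ∀ p x, M p x = (∑ i : Fin d, F p i * B x i) * dβ x)
    (horth : ∀ i j : Fin d,
      (∑ x : SA, dβ x * (B x i * B x j)) = if i = j then 1 else 0) :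
    ∀ p : SA, (∑ x : SA, M p x * r x) = ∑ i : Fin d, F p i * z i := by
  intro p
  have step1 : (∑ x : SA, M p x * r x)
      = ∑ x : SA, ∑ i : Fin d, ∑ j : Fin d,
          F p i * z j * (dβ x * (B x i * B x j)) := by
    refine Finset.sum_congr rfl fun x _ => ?_
    rw [hM, hr]
    simp only [Finset.sum_mul, Finset.mul_sum]
    rw [Finset.sum_comm]
    refine Finset.sum_congr rfl fun i _ => ?_
    refine Finset.sum_congr rfl fun j _ => ?_
    ring
  rw [step1, Finset.sum_comm]
  refine Finset.sum_congr rfl fun i _ => ?_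
  rw [Finset.sum_comm]
  calc (∑ j : Fin d, ∑ x : SA, F p i * z j * (dβ x * (B x i * B x j)))
      = ∑ j : Fin d, F p i * z j * (∑ x : SA, dβ x * (B x i * B x j)) := by
        refine Finset.sum_congr rfl fun j _ => ?_
        rw [Finset.mul_sum]
    _ = F p i * z i := by
        rw [Finset.sum_eq_single i]
        · rw [horth]; simp
        · intro j _ hj; rw [horth]; simp [Ne.symm hj]
        · simp
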